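/- arXiv:2405.18865 — 13 statements merged into one kernel-verified Lean document; each statement's English description precedes it below -/
import Mathlib

section
/- Let V be a finite-dimensional real vector space and let A₁, A₂, F be symmetric bilinear forms on V. Then the (0,6)-tensors satisfy the identity Q(A₁, A₂ ∧ F) + Q(A₂, A₁ ∧ F) + Q(F, A₁ ∧ A₂) = 0, where for symmetric (0,2)-tensors A, B their Kulkarni–Nomizu product is (A ∧ B)(X₁,X₂,X₃,X₄) = A(X₁,X₄)B(X₂,X₃) + A(X₂,X₃)B(X₁,X₄) − A(X₁,X₃)B(X₂,X₄) − A(X₂,X₄)B(X₁,X₃), and for a symmetric (0,2)-tensor A and (0,4)-tensor T the Tachibana tensor is Q(A,T)(X₁,X₂,X₃,X₄;X,Y) = −T((X∧_A Y)X₁,X₂,X₃,X₄) − T(X₁,(X∧_A Y)X₂,X₃,X₄) − T(X₁,X₂,(X∧_A Y)X₃,X₄) − T(X₁,X₂,X₃,(X∧_A Y)X₄) with (X∧_A Y)Z = A(Y,Z)X − A(X,Z)Y. -/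
variable {V : Type*} [AddCommGroup V] [Module ℝ V]

/-- Kulkarni–Nomizu product of two (0,2)-tensors. -/
def kn (A B : V → V → ℝ) : V → V → V → V → ℝ := fun x1 x2 x3 x4 =>
  A x1 x4 * B x2 x3 + A x2 x3 * B x1 x4 - A x1 x3 * B x2 x4 - A x2 x4 * B x1 x3

/-- The endomorphism `(X ∧_A Y)Z = A(Y,Z)X − A(X,Z)Y`. -/
def wedgeV (A : V → V → ℝ) (x y z : V) : V := A y z • x - A x z • y

/-- Tachibana tensor `Q(A,T)` of a (0,2)-tensor `A` and a (0,4)-tensor `T`. -/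
def Q4 (A : V → V → ℝ) (T : V → V → V → V → ℝ) : V → V → V → V → V → V → ℝ :=
  fun x1 x2 x3 x4 x y =>
    -(T (wedgeV A x y x1) x2 x3 x4) - T x1 (wedgeV A x y x2) x3 x4
      - T x1 x2 (wedgeV A x y x3) x4 - T x1 x2 x3 (wedgeV A x y x4)

/-- Q(A₁, A₂∧F) + Q(A₂, A₁∧F) + Q(F, A₁∧A₂) = 0. -/
theorem stmt_0 {V : Type*} [AddCommGroup V] [Module ℝ V] [FiniteDimensional ℝ V]
    (A₁ A₂ F : V →ₗ[ℝ] V →ₗ[ℝ] ℝ)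
    (hA₁ : ∀ x y, A₁ x y = A₁ y x) (hA₂ : ∀ x y, A₂ x y = A₂ y x)
    (hF : ∀ x y, F x y = F y x) :
    ∀ x₁ x₂ x₃ x₄ x y : V,
      Q4 (fun u v => A₁ u v) (kn (fun u v => A₂ u v) (fun u v => F u v)) x₁ x₂ x₃ x₄ x y
        + Q4 (fun u v => A₂ u v) (kn (fun u v => A₁ u v) (fun u v => F u v)) x₁ x₂ x₃ x₄ x y
        + Q4 (fun u v => F u v) (kn (fun u v => A₁ u v) (fun u v => A₂ u v)) x₁ x₂ x₃ x₄ x y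
      = 0 := by
  intro x₁ x₂ x₃ x₄ x y
  simp only [Q4, kn, wedgeV, map_sub, map_smul, LinearMap.sub_apply, LinearMap.smul_apply,
    smul_eq_mul, hA₁ x₁ x, hA₁ x₂ x, hA₁ x₃ x, hA₁ x₄ x, hA₁ x₁ y, hA₁ x₂ y, hA₁ x₃ y, hA₁ x₄ y,
    hA₂ x₁ x, hA₂ x₂ x, hA₂ x₃ x, hA₂ x₄ x, hA₂ x₁ y, hA₂ x₂ y, hA₂ x₃ y, hA₂ x₄ y,
    hF x₁ x, hF x₂ x, hF x₃ x, hF x₄ x, hF x₁ y, hF x₂ y, hF x₃ y, hF x₄ y]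
  ring
end

section
/- Let V be a finite-dimensional real vector space and let A₁, A₂, F be symmetric bilinear forms on V. Then A₁ ∧ Q(A₂,F) + A₂ ∧ Q(A₁,F) + Q(F, A₁ ∧ A₂) = 0, where for a symmetric (0,2)-tensor A and a (0,4)-tensor T, (A ∧ T)(X₁,X₂,X₃,X₄;Y₃,Y₄) = A(X₁,X₄)T(X₂,X₃,Y₃,Y₄) + A(X₂,X₃)T(X₁,X₄,Y₃,Y₄) − A(X₁,X₃)T(X₂,X₄,Y₃,Y₄) − A(X₂,X₄)T(X₁,X₃,Y₃,Y₄), and Q(A,F)(X₁,X₂;X,Y) = A(X₁,X)F(X₂,Y) + A(X₂,X)F(X₁,Y) − A(X₁,Y)F(X₂,X) − A(X₂,Y)F(X₁,X), equivalently Q(A,F)(X₁,X₂;X,Y) = −F((X∧_A Y)X₁,X₂) − F(X₁,(X∧_A Y)X₂). -/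
variable {V : Type*} [AddCommGroup V] [Module ℝ V]

/-- Kulkarni–Nomizu product of a (0,2)-tensor with a (0,4)-tensor. -/
def kn24 (A : V → V → ℝ) (T : V → V → V → V → ℝ) : V → V → V → V → V → V → ℝ :=
  fun x1 x2 x3 x4 y3 y4 =>
    A x1 x4 * T x2 x3 y3 y4 + A x2 x3 * T x1 x4 y3 y4
      - A x1 x3 * T x2 x4 y3 y4 - A x2 x4 * T x1 x3 y3 y4

/-- Tachibana tensor `Q(A,F)` of two (0,2)-tensors. -/
def Q2 (A F : V → V → ℝ) : V → V → V → V → ℝ :=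
  fun x1 x2 x y => -(F (wedgeV A x y x1) x2) - F x1 (wedgeV A x y x2)

/-- A₁ ∧ Q(A₂,F) + A₂ ∧ Q(A₁,F) + Q(F, A₁∧A₂) = 0. -/
theorem stmt_1 {V : Type*} [AddCommGroup V] [Module ℝ V] [FiniteDimensional ℝ V]
    (A₁ A₂ F : V →ₗ[ℝ] V →ₗ[ℝ] ℝ)
    (hA₁ : ∀ x y, A₁ x y = A₁ y x) (hA₂ : ∀ x y, A₂ x y = A₂ y x)
    (hF : ∀ x y, F x y = F y x) :
    ∀ x₁ x₂ x₃ x₄ x y : V,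
      kn24 (fun u v => A₁ u v) (Q2 (fun u v => A₂ u v) (fun u v => F u v)) x₁ x₂ x₃ x₄ x y
        + kn24 (fun u v => A₂ u v) (Q2 (fun u v => A₁ u v) (fun u v => F u v)) x₁ x₂ x₃ x₄ x y
        + Q4 (fun u v => F u v) (kn (fun u v => A₁ u v) (fun u v => A₂ u v)) x₁ x₂ x₃ x₄ x y
      = 0 := by
  intro x₁ x₂ x₃ x₄ x y
  simp only [kn24, Q2, Q4, kn, wedgeV, map_sub, map_smul, LinearMap.sub_apply,
    LinearMap.smul_apply, smul_eq_mul, hF x₁ x, hF x₁ y, hF x₂ x, hF x₂ y, hF x₃ x, hF x₃ y, hF x₄ x, hF x₄ y, hA₁ x₁ x, hA₁ x₁ y, hA₁ x₂ x, hA₁ x₂ y, hA₁ x₃ x, hA₁ x₃ y, hA₁ x₄ x, hA₁ x₄ y, hA₂ x₁ x, hA₂ x₁ y, hA₂ x₂ x, hA₂ x₂ y, hA₂ x₃ x, hA₂ x₃ y, hA₂ x₄ x, hA₂ x₄ y]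
  ring
end

section
/- Let V be a finite-dimensional real vector space and let A, F be symmetric bilinear forms on V. Then Q(A, A ∧ F) = −Q(F, (1/2) A ∧ A), where ∧ is the Kulkarni–Nomizu product and Q the Tachibana tensor. -/
variable {V : Type*} [AddCommGroup V] [Module ℝ V]

/-- Q(A, A∧F) = −Q(F, (1/2) A∧A). -/
theorem stmt_2 {V : Type*} [AddCommGroup V] [Module ℝ V] [FiniteDimensional ℝ V]
    (A F : V →ₗ[ℝ] V →ₗ[ℝ] ℝ)
    (hA : ∀ x y, A x y = A y x) (hF : ∀ x y, F x y = F y x) :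
    ∀ x₁ x₂ x₃ x₄ x y : V,
      Q4 (fun u v => A u v) (kn (fun u v => A u v) (fun u v => F u v)) x₁ x₂ x₃ x₄ x y
      = - Q4 (fun u v => F u v)
            (fun a b c d => (1/2 : ℝ) * kn (fun u v => A u v) (fun u v => A u v) a b c d)
            x₁ x₂ x₃ x₄ x y := by
  intro x₁ x₂ x₃ x₄ x y
  simp only [Q4, kn, wedgeV, map_sub, map_smul, LinearMap.sub_apply, LinearMap.smul_apply,
    smul_eq_mul]
  rw [hA y x₁, hA x x₁, hA y x₂, hA x x₂, hA y x₃, hA x x₃, hA y x₄, hA x x₄,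
    hF y x₁, hF x x₁, hF y x₂, hF x x₂, hF y x₃, hF x x₃, hF y x₄, hF x x₄]
  ring
end

section
/- Let (V,g) be an n-dimensional real vector space with a nondegenerate symmetric bilinear form g, and let A be a symmetric bilinear form on V of rank 2 (i.e., its g-associated endomorphism has rank 2). Then A ∧ A² = (1/2)·tr(A)·(A ∧ A), where ∧ is the Kulkarni–Nomizu product, A² is the bilinear form associated to the square of the g-associated endomorphism of A, and tr(A) is its trace. -/
/-!
Factor `a = ι ∘ u` through `ℝ²`. Then `A x y = u x ⬝ᵥ γ y` and `A (a x) y = (M *ᵥ u x) ⬝ᵥ γ y`,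
where `γ y = (g (ι eₖ) y)ₖ` and `M = u ∘ ι` is a `2 × 2` matrix with `tr M = tr a`, so both
Kulkarni–Nomizu products are pulled back from `ℝ²`. There `(A ∧ B)(x₁, x₂, x₃, x₄)` is, up to
sign, the polarized determinant of the `2 × 2` matrices `(A (xᵢ, xⱼ))`, `(B (xᵢ, xⱼ))` with
`i ∈ {1, 2}`, `j ∈ {3, 4}`, and the identity is Jacobi's `d/dt det (X + t X N) = tr N · det X`.
-/

variable {V : Type*} [AddCommGroup V] [Module ℝ V]

open Matrix

theorem kn_comp {V W : Type*} [AddCommGroup W] [Module ℝ W] (A B : W → W → ℝ) (f h : V → W)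
    (x₁ x₂ x₃ x₄ : V) :
    kn (fun x y => A (f x) (h y)) (fun x y => B (f x) (h y)) x₁ x₂ x₃ x₄
      = kn A B (f x₁) (f x₂) (h x₃) (h x₄) :=
  rfl

theorem kn_dotProduct_mulVec (M : Matrix (Fin 2) (Fin 2) ℝ) (s t c d : Fin 2 → ℝ) :
    kn (fun v w => v ⬝ᵥ w) (fun v w => M *ᵥ v ⬝ᵥ w) s t c d
      = (1/2 : ℝ) * M.trace * kn (fun v w => v ⬝ᵥ w) (fun v w => v ⬝ᵥ w) s t c d := by
  simp only [kn, dotProduct, mulVec, Matrix.trace, Matrix.diag, Fin.sum_univ_two]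
  ring

theorem LinearMap.exists_eq_comp_of_finrank_range_eq {K V W : Type*} [Field K]
    [AddCommGroup V] [Module K V] [FiniteDimensional K V] [AddCommGroup W] [Module K W] {n : ℕ}
    (a : V →ₗ[K] W)
    (h : Module.finrank K (LinearMap.range a) = n) :
    ∃ (u : V →ₗ[K] Fin n → K) (ι : (Fin n → K) →ₗ[K] W), a = ι ∘ₗ u := by
  let b := Module.finBasisOfFinrankEq K (LinearMap.range a) h
  refine ⟨b.equivFun.toLinearMap ∘ₗ a.rangeRestrict,
    (LinearMap.range a).subtype ∘ₗ b.equivFun.symm.toLinearMap, ?_⟩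
  ext x
  simp

theorem LinearMap.apply_comp_eq_dotProduct {V : Type*} [AddCommGroup V] [Module ℝ V] {n : ℕ}
    (g : V →ₗ[ℝ] V →ₗ[ℝ] ℝ) (ι : (Fin n → ℝ) →ₗ[ℝ] V) (v : Fin n → ℝ) (y : V) :
    g (ι v) y = v ⬝ᵥ fun k => g (ι (Pi.single k 1)) y := by
  conv_lhs => rw [← Finset.univ_sum_single v]
  simp only [map_sum, LinearMap.sum_apply, dotProduct]
  refine Finset.sum_congr rfl fun k _ => ?_
  rw [← smul_eq_mul, ← LinearMap.smul_apply, ← map_smul, ← map_smul, ← Pi.single_smul,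
    smul_eq_mul, mul_one]

theorem LinearMap.trace_comp_eq_trace_toMatrix' {V : Type*} [AddCommGroup V] [Module ℝ V]
    [FiniteDimensional ℝ V] {n : ℕ} (u : V →ₗ[ℝ] Fin n → ℝ) (ι : (Fin n → ℝ) →ₗ[ℝ] V) :
    LinearMap.trace ℝ V (ι ∘ₗ u) = (LinearMap.toMatrix' (u ∘ₗ ι)).trace := by
  rw [LinearMap.trace_comp_comm', ← Matrix.trace_toLin'_eq, Matrix.toLin'_toMatrix']

theorem kn_comp_eq_half_trace_mul {V : Type*} [AddCommGroup V] [Module ℝ V]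
    [FiniteDimensional ℝ V] (g : V →ₗ[ℝ] V →ₗ[ℝ] ℝ) (a : V →ₗ[ℝ] V)
    (hrank : Module.finrank ℝ (LinearMap.range a) = 2) (x₁ x₂ x₃ x₄ : V) :
    kn (fun u v => g (a u) v) (fun u v => g (a (a u)) v) x₁ x₂ x₃ x₄
      = (1/2 : ℝ) * LinearMap.trace ℝ V a
          * kn (fun u v => g (a u) v) (fun u v => g (a u) v) x₁ x₂ x₃ x₄ := by
  obtain ⟨u, ι, rfl⟩ := a.exists_eq_comp_of_finrank_range_eq hrank
  set M := LinearMap.toMatrix' (u ∘ₗ ι)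
  set γ : V → Fin 2 → ℝ := fun y k => g (ι (Pi.single k 1)) y
  have hA : (fun x y => g ((ι ∘ₗ u) x) y) = fun x y => u x ⬝ᵥ γ y := by
    ext x y
    exact g.apply_comp_eq_dotProduct ι (u x) y
  have hA_sq : (fun x y => g ((ι ∘ₗ u) ((ι ∘ₗ u) x)) y) = fun x y => M *ᵥ u x ⬝ᵥ γ y := by
    ext x y
    rw [LinearMap.toMatrix'_mulVec]
    exact g.apply_comp_eq_dotProduct ι _ y
  rw [hA, hA_sq, LinearMap.trace_comp_eq_trace_toMatrix',
    kn_comp _ (fun v w => M *ᵥ v ⬝ᵥ w) u γ, kn_comp _ _ u γ]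
  exact kn_dotProduct_mulVec M (u x₁) (u x₂) (γ x₃) (γ x₄)

theorem stmt_4_general {V : Type*} [AddCommGroup V] [Module ℝ V] [FiniteDimensional ℝ V]
    (g A : V →ₗ[ℝ] V →ₗ[ℝ] ℝ)
    (a : V →ₗ[ℝ] V) (ha : ∀ x y, g (a x) y = A x y)
    (hrank : Module.finrank ℝ (LinearMap.range a) = 2) :
    ∀ x₁ x₂ x₃ x₄ : V,
      kn (fun u v => A u v) (fun u v => A (a u) v) x₁ x₂ x₃ x₄
        = (1/2 : ℝ) * LinearMap.trace ℝ V a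
            * kn (fun u v => A u v) (fun u v => A u v) x₁ x₂ x₃ x₄ := by
  intro x₁ x₂ x₃ x₄
  simp only [← ha]
  exact kn_comp_eq_half_trace_mul g a hrank x₁ x₂ x₃ x₄

/-- if `rank A = 2` then `A ∧ A² = (1/2)·tr(A)·(A ∧ A)`. -/
theorem stmt_4 {V : Type*} [AddCommGroup V] [Module ℝ V] [FiniteDimensional ℝ V]
    (g A : V →ₗ[ℝ] V →ₗ[ℝ] ℝ)
    (hg : ∀ x y, g x y = g y x)
    (hgnd : ∀ x : V, (∀ y : V, g x y = 0) → x = 0)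
    (hA : ∀ x y, A x y = A y x)
    (a : V →ₗ[ℝ] V) (ha : ∀ x y, g (a x) y = A x y)
    (hrank : Module.finrank ℝ (LinearMap.range a) = 2) :
    ∀ x₁ x₂ x₃ x₄ : V,
      kn (fun u v => A u v) (fun u v => A (a u) v) x₁ x₂ x₃ x₄
        = (1/2 : ℝ) * LinearMap.trace ℝ V a
            * kn (fun u v => A u v) (fun u v => A u v) x₁ x₂ x₃ x₄ :=
  stmt_4_general g A a ha hrank
end

section
/- Let (V,g) be a finite-dimensional real vector space with a nondegenerate symmetric bilinear form, and let A be a symmetric bilinear form on V of rank 2. Then A² ∧ A² = −(1/2)(tr(A²) − tr(A)²)·(A ∧ A). -/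
variable {V : Type*} [AddCommGroup V] [Module ℝ V]

/-!
Because `a` is `g`-self-adjoint, `A(x, y) = g(a x, y)` depends only on the coordinates
`p x, p y ∈ ℝ²` of `a x, a y` in a basis `b` of the plane `range a`: choosing `a uᵢ = bᵢ`,
`g(bᵢ, y) = g(uᵢ, a y)` gives `A(x, y) = p x ⬝ G p y` with `Gᵢⱼ = g(uᵢ, bⱼ)`, and
`A(a x, y) = (M p x) ⬝ G p y` with `M` the matrix of `a` on its range. For a bilinear form
`B` on ℝ², replacing `B(v, w)` by `B(M v, w)` multiplies `B(v₁,v₄) B(v₂,v₃) - B(v₁,v₃) B(v₂,v₄)`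
by `det M`, so `A² ∧ A² = det M • (A ∧ A)`; finally, for a `2 × 2` matrix,
`det M = ((tr M)² - tr M²) / 2`, and `tr M = tr a`, `tr M² = tr a²` since `a` maps into its
range.
-/

open Matrix LinearMap

theorem kn_mulVec_dotProduct {X : Type*} (p : X → Fin 2 → ℝ)
    (M G : Matrix (Fin 2) (Fin 2) ℝ) (x₁ x₂ x₃ x₄ : X) :
    kn (fun u v => M *ᵥ p u ⬝ᵥ G *ᵥ p v) (fun u v => M *ᵥ p u ⬝ᵥ G *ᵥ p v) x₁ x₂ x₃ x₄
      = M.det * kn (fun u v => p u ⬝ᵥ G *ᵥ p v) (fun u v => p u ⬝ᵥ G *ᵥ p v) x₁ x₂ x₃ x₄ := by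
  simp only [kn, det_fin_two, dotProduct, mulVec, Fin.sum_univ_two]
  ring

theorem Matrix.two_mul_det_fin_two {R : Type*} [CommRing R] (M : Matrix (Fin 2) (Fin 2) R) :
    2 * M.det = M.trace ^ 2 - (M * M).trace := by
  simp only [det_fin_two, trace_fin_two, mul_apply, Fin.sum_univ_two]
  ring

namespace LinearMap

section Range

variable {R M ι : Type*} [CommRing R] [AddCommGroup M] [Module R M] [Fintype ι]

def restrictRange (a : M →ₗ[R] M) : range a →ₗ[R] range a :=
  a.restrict fun x _ => mem_range_self a x

theorem repr_rangeRestrict_apply [DecidableEq ι] (a : M →ₗ[R] M)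
    (b : Module.Basis ι R (range a)) (x : M) :
    ⇑(b.repr (a.rangeRestrict (a x)))
      = toMatrix b b a.restrictRange *ᵥ b.repr (a.rangeRestrict x) := by
  rw [toMatrix_mulVec_repr]
  rfl

theorem apply_eq_sum_repr_rangeRestrict (a : M →ₗ[R] M) (b : Module.Basis ι R (range a))
    (x : M) :
    a x = ∑ i, b.repr (a.rangeRestrict x) i • (b i : M) := by
  have h := congrArg Subtype.val (b.sum_repr (a.rangeRestrict x))
  simp only [Submodule.coe_sum, Submodule.coe_smul, codRestrict_apply] at h
  exact h.symm

theorem apply_apply_eq_dotProduct_mulVec (g : M →ₗ[R] M →ₗ[R] R) (a : M →ₗ[R] M)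
    (hsa : ∀ x y, g (a x) y = g x (a y)) (b : Module.Basis ι R (range a)) (u : ι → M)
    (hu : ∀ i, a (u i) = b i) (x y : M) :
    g (a x) y = ⇑(b.repr (a.rangeRestrict x)) ⬝ᵥ
      (Matrix.of (fun i j => g (u i) (b j)) *ᵥ ⇑(b.repr (a.rangeRestrict y))) := by
  have hb : ∀ i, g (b i) y = ∑ j, b.repr (a.rangeRestrict y) j * g (u i) (b j) := by
    intro i
    rw [← hu, hsa, apply_eq_sum_repr_rangeRestrict a b y]
    simp [map_sum, mul_comm]
  rw [apply_eq_sum_repr_rangeRestrict a b x]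
  simp [dotProduct, mulVec, hb, mul_comm]

end Range

section Trace

variable {K V : Type*} [Field K] [AddCommGroup V] [Module K V] [FiniteDimensional K V]

theorem trace_restrictRange (a : V →ₗ[K] V) : trace K (range a) a.restrictRange = trace K V a :=
  trace_restrict_eq_of_forall_mem _ _ (mem_range_self a)

theorem trace_restrictRange_mul_self (a : V →ₗ[K] V) :
    trace K (range a) (a.restrictRange * a.restrictRange) = trace K V (a ∘ₗ a) :=
  trace_restrict_eq_of_forall_mem (range a) (a ∘ₗ a) fun x => mem_range_self a (a x)

end Trace

end LinearMap

theorem stmt_5_general {V : Type*} [AddCommGroup V] [Module ℝ V] [FiniteDimensional ℝ V]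
    (g A : V →ₗ[ℝ] V →ₗ[ℝ] ℝ)
    (hg : ∀ x y, g x y = g y x)
    (hA : ∀ x y, A x y = A y x)
    (a : V →ₗ[ℝ] V) (ha : ∀ x y, g (a x) y = A x y)
    (hrank : Module.finrank ℝ (LinearMap.range a) = 2) :
    ∀ x₁ x₂ x₃ x₄ : V,
      kn (fun u v => A (a u) v) (fun u v => A (a u) v) x₁ x₂ x₃ x₄
        = -(1/2 : ℝ) * (LinearMap.trace ℝ V (a ∘ₗ a) - (LinearMap.trace ℝ V a) ^ 2)
            * kn (fun u v => A u v) (fun u v => A u v) x₁ x₂ x₃ x₄ := by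
  intro x₁ x₂ x₃ x₄
  have hsa : ∀ x y, g (a x) y = g x (a y) := fun x y => by rw [ha, hA, ← ha, hg]
  let b := Module.finBasisOfFinrankEq ℝ (range a) hrank
  choose u hu using fun i => (b i).2
  set p := fun x => ⇑(b.repr (a.rangeRestrict x))
  set G := Matrix.of fun i j => g (u i) (b j)
  set M := toMatrix b b a.restrictRange
  have hA₁ : (fun x y => A x y) = fun x y => p x ⬝ᵥ G *ᵥ p y := by
    ext x y
    rw [← ha, apply_apply_eq_dotProduct_mulVec g a hsa b u hu]
  have hA₂ : (fun x y => A (a x) y) = fun x y => M *ᵥ p x ⬝ᵥ G *ᵥ p y := by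
    ext x y
    rw [← ha, apply_apply_eq_dotProduct_mulVec g a hsa b u hu, repr_rangeRestrict_apply]
  have hdet : -(1/2 : ℝ) * (trace ℝ V (a ∘ₗ a) - trace ℝ V a ^ 2) = M.det := by
    rw [← trace_restrictRange_mul_self a, ← trace_restrictRange a, trace_eq_matrix_trace ℝ b,
      trace_eq_matrix_trace ℝ b, toMatrix_mul]
    linarith [M.two_mul_det_fin_two]
  rw [hA₁, hA₂, kn_mulVec_dotProduct, hdet]

/-- if `rank A = 2` then `A² ∧ A² = −(1/2)(tr(A²) − tr(A)²)·(A ∧ A)`. -/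
theorem stmt_5 {V : Type*} [AddCommGroup V] [Module ℝ V] [FiniteDimensional ℝ V]
    (g A : V →ₗ[ℝ] V →ₗ[ℝ] ℝ)
    (hg : ∀ x y, g x y = g y x)
    (hgnd : ∀ x : V, (∀ y : V, g x y = 0) → x = 0)
    (hA : ∀ x y, A x y = A y x)
    (a : V →ₗ[ℝ] V) (ha : ∀ x y, g (a x) y = A x y)
    (hrank : Module.finrank ℝ (LinearMap.range a) = 2) :
    ∀ x₁ x₂ x₃ x₄ : V,
      kn (fun u v => A (a u) v) (fun u v => A (a u) v) x₁ x₂ x₃ x₄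
        = -(1/2 : ℝ) * (LinearMap.trace ℝ V (a ∘ₗ a) - (LinearMap.trace ℝ V a) ^ 2)
            * kn (fun u v => A u v) (fun u v => A u v) x₁ x₂ x₃ x₄ :=
  stmt_5_general g A hg hA a ha hrank
end

section
/- Let (V,g) be a finite-dimensional real vector space with a nondegenerate symmetric bilinear form, and let A be a symmetric bilinear form on V of rank 2. Then (A² − tr(A)·A) ∧ (A² − tr(A)·A) = −(1/2)(tr(A²) − tr(A)²)·(A ∧ A). -/
/-!
Choose a basis `e₀, e₁` of the range of `a` and write `a = α₀ ⊗ e₀ + α₁ ⊗ e₁`, so that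
`A = ∑ᵢ αᵢ ⊗ g(eᵢ, ·)`. If `M` is the matrix of `a` on its range, then `αᵢ ∘ a = ∑ⱼ Mᵢⱼ αⱼ`,
so `A² − tr(A) A` has the same shape with `α` replaced by `(M − tr M) α`. The Kulkarni–Nomizu
square of `∑ᵢ αᵢ ⊗ φᵢ` only sees `α₀ ∧ α₁`, hence gets multiplied by
`det (M − tr M) = det M = −½ (tr M² − (tr M)²)`, and `tr a = tr M`, `tr a² = tr M²`.
-/

variable {V : Type*} [AddCommGroup V] [Module ℝ V]

open LinearMap Matrix

lemma kn_self_eq_det_mul_kn_self {X : Type*} {A B : X → X → ℝ} (α φ : Fin 2 → X → ℝ)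
    (N : Matrix (Fin 2) (Fin 2) ℝ)
    (hA : ∀ u v, A u v = ∑ i, α i u * φ i v)
    (hB : ∀ u v, B u v = ∑ i, (N *ᵥ fun j => α j u) i * φ i v) (x₁ x₂ x₃ x₄ : X) :
    kn B B x₁ x₂ x₃ x₄ = N.det * kn A A x₁ x₂ x₃ x₄ := by
  simp only [kn, hA, hB, det_fin_two, mulVec, dotProduct, Fin.sum_univ_two]
  ring

lemma Matrix.det_sub_trace_smul_one_fin_two (M : Matrix (Fin 2) (Fin 2) ℝ) :
    (M - M.trace • 1).det = -(1/2 : ℝ) * ((M * M).trace - M.trace ^ 2) := by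
  simp only [det_fin_two, trace_fin_two, mul_apply, Fin.sum_univ_two, sub_apply, smul_apply,
    one_fin_two, of_apply, cons_val_zero, cons_val_one, cons_val_fin_one, smul_eq_mul]
  ring

section RangeCoordinates

variable {ι : Type*} [Fintype ι] (a : V →ₗ[ℝ] V) (e : Module.Basis ι ℝ (range a))

abbrev rangeEndo : range a →ₗ[ℝ] range a := a.restrict fun x _ => mem_range_self a x

lemma apply_eq_sum_coord_rangeRestrict (x : V) :
    a x = ∑ i, e.coord i (a.rangeRestrict x) • (e i : V) := by
  conv_lhs => rw [show a x = (a.rangeRestrict x : V) from rfl, ← e.sum_repr (a.rangeRestrict x)]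
  simp only [Submodule.coe_sum, Submodule.coe_smul, Module.Basis.coord_apply]

variable [DecidableEq ι]

lemma coord_rangeRestrict_apply (x : V) (i : ι) :
    e.coord i (a.rangeRestrict (a x))
      = (toMatrix e e (rangeEndo a) *ᵥ fun j => e.coord j (a.rangeRestrict x)) i := by
  have : a.rangeRestrict (a x) = rangeEndo a (a.rangeRestrict x) := rfl
  simp only [Module.Basis.coord_apply, this, toMatrix_mulVec_repr]

variable [FiniteDimensional ℝ V]

lemma trace_eq_trace_toMatrix_rangeEndo :
    trace ℝ V a = (toMatrix e e (rangeEndo a)).trace := by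
  rw [← trace_restrict_eq_of_forall_mem (range a) a (mem_range_self a),
    trace_eq_matrix_trace ℝ e]

lemma trace_comp_self_eq_trace_toMatrix_rangeEndo_sq :
    trace ℝ V (a ∘ₗ a) = (toMatrix e e (rangeEndo a) * toMatrix e e (rangeEndo a)).trace := by
  rw [← trace_restrict_eq_of_forall_mem (range a) (a ∘ₗ a) fun x => mem_range_self a (a x),
    trace_eq_matrix_trace ℝ e, ← toMatrix_mul]
  rfl

end RangeCoordinates

theorem stmt_6_general {V : Type*} [AddCommGroup V] [Module ℝ V] [FiniteDimensional ℝ V]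
    (g A : V →ₗ[ℝ] V →ₗ[ℝ] ℝ)
    (a : V →ₗ[ℝ] V) (ha : ∀ x y, g (a x) y = A x y)
    (hrank : Module.finrank ℝ (LinearMap.range a) = 2) :
    ∀ x₁ x₂ x₃ x₄ : V,
      kn (fun u v => A (a u) v - LinearMap.trace ℝ V a * A u v)
         (fun u v => A (a u) v - LinearMap.trace ℝ V a * A u v) x₁ x₂ x₃ x₄
        = -(1/2 : ℝ) * (LinearMap.trace ℝ V (a ∘ₗ a) - (LinearMap.trace ℝ V a) ^ 2)
            * kn (fun u v => A u v) (fun u v => A u v) x₁ x₂ x₃ x₄ := by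
  intro x₁ x₂ x₃ x₄
  let e := Module.finBasisOfFinrankEq ℝ (range a) hrank
  set M := toMatrix e e (rangeEndo a)
  let α : Fin 2 → V → ℝ := fun i u => e.coord i (a.rangeRestrict u)
  have hA : ∀ u v, A u v = ∑ i, α i u * g (e i) v := fun u v => by
    simp only [α, ← ha, apply_eq_sum_coord_rangeRestrict a e u, map_sum, map_smul,
      LinearMap.sum_apply, LinearMap.smul_apply, smul_eq_mul]
  have hB : ∀ u v, A (a u) v - trace ℝ V a * A u v
      = ∑ i, ((M - M.trace • 1) *ᵥ fun j => α j u) i * g (e i) v := fun u v => by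
    simp only [hA, α, coord_rangeRestrict_apply, trace_eq_trace_toMatrix_rangeEndo a e, sub_mulVec,
      smul_mulVec, one_mulVec, Pi.sub_apply, Pi.smul_apply, smul_eq_mul, Finset.mul_sum,
      ← Finset.sum_sub_distrib, sub_mul, mul_assoc]
    rfl
  rw [kn_self_eq_det_mul_kn_self α _ _ hA hB, det_sub_trace_smul_one_fin_two,
    trace_comp_self_eq_trace_toMatrix_rangeEndo_sq a e, trace_eq_trace_toMatrix_rangeEndo a e]

/-- if `rank A = 2` then
`(A² − tr(A)·A) ∧ (A² − tr(A)·A) = −(1/2)(tr(A²) − tr(A)²)·(A ∧ A)`. -/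
theorem stmt_6 {V : Type*} [AddCommGroup V] [Module ℝ V] [FiniteDimensional ℝ V]
    (g A : V →ₗ[ℝ] V →ₗ[ℝ] ℝ)
    (hg : ∀ x y, g x y = g y x)
    (hgnd : ∀ x : V, (∀ y : V, g x y = 0) → x = 0)
    (hA : ∀ x y, A x y = A y x)
    (a : V →ₗ[ℝ] V) (ha : ∀ x y, g (a x) y = A x y)
    (hrank : Module.finrank ℝ (LinearMap.range a) = 2) :
    ∀ x₁ x₂ x₃ x₄ : V,
      kn (fun u v => A (a u) v - LinearMap.trace ℝ V a * A u v)
         (fun u v => A (a u) v - LinearMap.trace ℝ V a * A u v) x₁ x₂ x₃ x₄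
        = -(1/2 : ℝ) * (LinearMap.trace ℝ V (a ∘ₗ a) - (LinearMap.trace ℝ V a) ^ 2)
            * kn (fun u v => A u v) (fun u v => A u v) x₁ x₂ x₃ x₄ :=
  stmt_6_general g A a ha hrank
end

section
/- Let (V,g) be a finite-dimensional real vector space with a nondegenerate symmetric bilinear form, and let A be a symmetric bilinear form on V of rank 2. Then A⁴ = (1/2)( (tr(A²)+tr(A)²)·A² + tr(A)(tr(A²) − tr(A)²)·A ), where Aᵖ is the bilinear form associated to the p-th power of the g-associated endomorphism of A. -/
variable {V : Type*} [AddCommGroup V] [Module ℝ V]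

/-!
The endomorphism `a` maps `V` into its range `W`, a plane. On `W`, Cayley–Hamilton gives
`b² = tr(b) b − det(b)`, with `2 det(b) = tr(b)² − tr(b²)`, and the traces of `b` and `b²` are
those of `a` and `a²` since `a` and `a²` take values in `W`. Applying this to `a x ∈ W` gives
`a³ = tr(a) a² − det(b) a` on `V`, hence `a⁴ = (tr(a)² − det(b)) a² − tr(a) det(b) a`, which is the
claim after lowering an index with `g`.
-/

theorem Matrix.two_smul_mul_self_fin_two {R : Type*} [CommRing R]
    (M : Matrix (Fin 2) (Fin 2) R) :
    (2 : R) • (M * M) = (2 * M.trace) • M - (M.trace ^ 2 - (M * M).trace) • 1 := by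
  ext i j
  fin_cases i <;> fin_cases j <;>
    simp [Matrix.mul_apply, Matrix.trace_fin_two, Fin.sum_univ_two] <;> ring

theorem LinearMap.two_smul_comp_self_of_finrank_eq_two {K W : Type*} [Field K]
    [AddCommGroup W] [Module K W] (hW : Module.finrank K W = 2) (f : W →ₗ[K] W) :
    (2 : K) • (f ∘ₗ f) = (2 * trace K W f) • f - (trace K W f ^ 2 - trace K W (f ∘ₗ f)) • id := by
  have : FiniteDimensional K W := .of_finrank_eq_succ hW
  let B := Module.finBasisOfFinrankEq K W hW
  apply (toMatrix B B).injective
  simp only [map_sub, map_smul, toMatrix_comp B B B, toMatrix_id,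
    trace_eq_matrix_trace K B]
  exact (toMatrix B B f).two_smul_mul_self_fin_two

theorem LinearMap.two_smul_cube_of_finrank_range_eq_two {K V : Type*} [Field K]
    [AddCommGroup V] [Module K V] [FiniteDimensional K V] (a : V →ₗ[K] V)
    (ha : Module.finrank K (range a) = 2) (x : V) :
    (2 : K) • a (a (a x))
      = (2 * trace K V a) • a (a x) - (trace K V a ^ 2 - trace K V (a ∘ₗ a)) • a x := by
  have hmaps : Set.MapsTo a (range a) (range a) := fun v _ ↦ mem_range_self a v
  let b := a.restrict hmaps
  have htr : trace K _ b = trace K V a :=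
    trace_restrict_eq_of_forall_mem _ a (mem_range_self a)
  have htr_sq : trace K _ (b ∘ₗ b) = trace K V (a ∘ₗ a) := by
    rw [← restrict_comp hmaps hmaps]
    exact trace_restrict_eq_of_forall_mem _ (a ∘ₗ a) fun v ↦ mem_range_self a (a v)
  have hCH := congr($(two_smul_comp_self_of_finrank_eq_two ha b) ⟨a x, mem_range_self a x⟩)
  rw [htr, htr_sq] at hCH
  exact congr(Subtype.val $hCH)

theorem stmt_7_general {V : Type*} [AddCommGroup V] [Module ℝ V] [FiniteDimensional ℝ V]
    (g A : V →ₗ[ℝ] V →ₗ[ℝ] ℝ)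
    (a : V →ₗ[ℝ] V) (ha : ∀ x y, g (a x) y = A x y)
    (hrank : Module.finrank ℝ (LinearMap.range a) = 2) :
    ∀ x y : V,
      A (a (a (a x))) y
        = (1/2 : ℝ) * ((LinearMap.trace ℝ V (a ∘ₗ a) + (LinearMap.trace ℝ V a) ^ 2) * A (a x) y
            + LinearMap.trace ℝ V a
              * (LinearMap.trace ℝ V (a ∘ₗ a) - (LinearMap.trace ℝ V a) ^ 2) * A x y) := by
  intro x y
  set t := LinearMap.trace ℝ V a
  set s := LinearMap.trace ℝ V (a ∘ₗ a)
  have hcube (v : V) : 2 * A (a (a v)) y = 2 * t * A (a v) y - (t ^ 2 - s) * A v y := by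
    simpa only [← ha, map_smul, map_sub, LinearMap.smul_apply, LinearMap.sub_apply,
      smul_eq_mul] using congr(g $(a.two_smul_cube_of_finrank_range_eq_two hrank v) y)
  linear_combination (1/2 : ℝ) * hcube (a x) + t / 2 * hcube x

/-- if `rank A = 2` then
`A⁴ = (1/2)((tr(A²)+tr(A)²)·A² + tr(A)(tr(A²) − tr(A)²)·A)`. -/
theorem stmt_7 {V : Type*} [AddCommGroup V] [Module ℝ V] [FiniteDimensional ℝ V]
    (g A : V →ₗ[ℝ] V →ₗ[ℝ] ℝ)
    (hg : ∀ x y, g x y = g y x)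
    (hgnd : ∀ x : V, (∀ y : V, g x y = 0) → x = 0)
    (hA : ∀ x y, A x y = A y x)
    (a : V →ₗ[ℝ] V) (ha : ∀ x y, g (a x) y = A x y)
    (hrank : Module.finrank ℝ (LinearMap.range a) = 2) :
    ∀ x y : V,
      A (a (a (a x))) y
        = (1/2 : ℝ) * ((LinearMap.trace ℝ V (a ∘ₗ a) + (LinearMap.trace ℝ V a) ^ 2) * A (a x) y
            + LinearMap.trace ℝ V a
              * (LinearMap.trace ℝ V (a ∘ₗ a) - (LinearMap.trace ℝ V a) ^ 2) * A x y) :=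
  stmt_7_general g A a ha hrank
end

section
/- Let (V,g) be a finite-dimensional real vector space with a nondegenerate symmetric bilinear form, and let A be a symmetric bilinear form on V of rank 2. Then Q(A², (1/2)·A ∧ A) = 0, where Q is the Tachibana tensor and ∧ the Kulkarni–Nomizu product. -/
variable {V : Type*} [AddCommGroup V] [Module ℝ V]

/-! If `a` has rank two, `A = g(a ·, ·)` and `A² = A(a ·, ·)` are both symmetric forms in the
two coordinate functionals `p, q` of `a` with respect to a basis of its range. For any two
symmetric forms `A, B` in the same pair of functionals, `Q(B, ½ A ∧ A)` vanishes identically: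
after expanding the wedge operators through the linearity of `p` and `q`, this is a polynomial
identity in the values of `p` and `q`. -/

def IsSymmFormIn (p q : V →ₗ[ℝ] ℝ) (C : V → V → ℝ) : Prop :=
  ∃ α β δ : ℝ, ∀ u v, C u v = α * (p u * p v) + β * (p u * q v + q u * p v) + δ * (q u * q v)

theorem Q4_half_kn_eq_zero_of_isSymmFormIn {p q : V →ₗ[ℝ] ℝ} {A B : V → V → ℝ}
    (hA : IsSymmFormIn p q A) (hB : IsSymmFormIn p q B) (x₁ x₂ x₃ x₄ x y : V) :
    Q4 B (fun p q r s => (1/2 : ℝ) * kn A A p q r s) x₁ x₂ x₃ x₄ x y = 0 := by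
  obtain ⟨α, β, δ, hA⟩ := hA
  obtain ⟨t₁, t₂, t₃, hB⟩ := hB
  simp only [Q4, kn, hA, wedgeV, map_sub, map_smul, smul_eq_mul, hB]
  ring

theorem isSymmFormIn_of_symm {p q : V →ₗ[ℝ] ℝ} {C : V → V → ℝ} (hC : ∀ u v, C u v = C v u)
    (u₁ u₂ : V) (h : ∀ u v, C u v = p u * C u₁ v + q u * C u₂ v) : IsSymmFormIn p q C := by
  refine ⟨C u₁ u₁, C u₁ u₂, C u₂ u₂, fun u v => ?_⟩
  have h₁ : C u₁ v = p v * C u₁ u₁ + q v * C u₂ u₁ := by rw [hC, h]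
  have h₂ : C u₂ v = p v * C u₁ u₂ + q v * C u₂ u₂ := by rw [hC, h]
  rw [h, h₁, h₂, hC u₂ u₁]
  ring

theorem exists_eq_smul_add_smul_of_finrank_range_eq_two {a : V →ₗ[ℝ] V}
    (hrank : Module.finrank ℝ (LinearMap.range a) = 2) :
    ∃ (p q : V →ₗ[ℝ] ℝ) (u₁ u₂ : V), ∀ u, a u = p u • a u₁ + q u • a u₂ := by
  have : Module.Finite ℝ (LinearMap.range a) := Module.finite_of_finrank_eq_succ hrank
  let b := Module.finBasisOfFinrankEq ℝ (LinearMap.range a) hrank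
  obtain ⟨u₁, hu₁⟩ := (b 0).2
  obtain ⟨u₂, hu₂⟩ := (b 1).2
  refine ⟨b.coord 0 ∘ₗ a.rangeRestrict, b.coord 1 ∘ₗ a.rangeRestrict, u₁, u₂, fun u => ?_⟩
  have hu := congrArg Subtype.val (b.sum_repr (a.rangeRestrict u))
  simp only [Fin.sum_univ_two, Submodule.coe_add, Submodule.coe_smul,
    LinearMap.codRestrict_apply] at hu
  simp [← hu, hu₁, hu₂]

theorem stmt_8_general {V : Type*} [AddCommGroup V] [Module ℝ V]
    (g A : V →ₗ[ℝ] V →ₗ[ℝ] ℝ)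
    (hg : ∀ x y, g x y = g y x)
    (hA : ∀ x y, A x y = A y x)
    (a : V →ₗ[ℝ] V) (ha : ∀ x y, g (a x) y = A x y)
    (hrank : Module.finrank ℝ (LinearMap.range a) = 2) :
    ∀ x₁ x₂ x₃ x₄ x y : V,
      Q4 (fun u v => A (a u) v)
        (fun p q r s => (1/2 : ℝ) * kn (fun u v => A u v) (fun u v => A u v) p q r s)
        x₁ x₂ x₃ x₄ x y = 0 := by
  obtain ⟨p, q, u₁, u₂, hau⟩ := exists_eq_smul_add_smul_of_finrank_range_eq_two hrank
  have hA_form : IsSymmFormIn p q (fun u v => A u v) :=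
    isSymmFormIn_of_symm hA u₁ u₂ fun u v => by simp [← ha, hau u]
  have hA2_symm : ∀ u v, A (a u) v = A (a v) u := fun u v => by
    rw [hA, ← ha, hg, ha, hA]
  have hA2_form : IsSymmFormIn p q (fun u v => A (a u) v) :=
    isSymmFormIn_of_symm hA2_symm u₁ u₂ fun u v => by simp [hau u]
  exact Q4_half_kn_eq_zero_of_isSymmFormIn hA_form hA2_form

/-- if `rank A = 2` then `Q(A², (1/2)·A ∧ A) = 0`. -/
theorem stmt_8 {V : Type*} [AddCommGroup V] [Module ℝ V] [FiniteDimensional ℝ V]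
    (g A : V →ₗ[ℝ] V →ₗ[ℝ] ℝ)
    (hg : ∀ x y, g x y = g y x)
    (hgnd : ∀ x : V, (∀ y : V, g x y = 0) → x = 0)
    (hA : ∀ x y, A x y = A y x)
    (a : V →ₗ[ℝ] V) (ha : ∀ x y, g (a x) y = A x y)
    (hrank : Module.finrank ℝ (LinearMap.range a) = 2) :
    ∀ x₁ x₂ x₃ x₄ x y : V,
      Q4 (fun u v => A (a u) v)
        (fun p q r s => (1/2 : ℝ) * kn (fun u v => A u v) (fun u v => A u v) p q r s)
        x₁ x₂ x₃ x₄ x y = 0 :=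
  stmt_8_general g A hg hA a ha hrank
end

section
/- Let (V,g) be an n-dimensional (n ≥ 3) real vector space with a nondegenerate symmetric bilinear form g, let A be a symmetric bilinear form on V, and suppose rank(A − α·g) = 1 for some real number α. Then g ∧ A² + ((n−2)/2)·A ∧ A − tr(A)·(g ∧ A) + ((tr(A)² − tr(A²))/(2(n−1)))·(g ∧ g) = 0, i.e., the tensor E(A) vanishes. -/
variable {V : Type*} [AddCommGroup V] [Module ℝ V]

/-!
Write `a = α • id + φ ⊗ w` with `φ` a linear form, using `rank (a - α • id) = 1`, and put
`B x y = φ x * g w y`, `t = φ w`. Then `A = α g + B`, `A² = α² g + (2α + t) B`, `tr a = n α + t` and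
`tr a² = n α² + (2α + t) t`. The Kulkarni–Nomizu product is bilinear and symmetric and vanishes on
`B ∧ B` because `B` has rank one, so `E(A)` is a combination of `g ∧ B` and `g ∧ g` whose coefficients
`(2α + t) + (n - 2) α - (n α + t)` and `α² + (n - 2) α² / 2 - (n α + t) α + (n α² / 2 + α t)` both vanish.
-/

theorem LinearMap.exists_eq_smulRight_of_finrank_range_eq_one {K M N : Type*} [Field K]
    [AddCommGroup M] [Module K M] [AddCommGroup N] [Module K N] {f : M →ₗ[K] N}
    (hf : Module.finrank K (LinearMap.range f) = 1) :
    ∃ (φ : M →ₗ[K] K) (w : N), f = φ.smulRight w := by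
  have : Module.Finite K (LinearMap.range f) := Module.finite_of_finrank_eq_succ hf
  let e := Module.finBasisOfFinrankEq K (LinearMap.range f) hf
  refine ⟨e.coord 0 ∘ₗ f.rangeRestrict, e 0, LinearMap.ext fun x => ?_⟩
  have hx := e.sum_repr (f.rangeRestrict x)
  rw [Fin.sum_univ_one] at hx
  simpa using congrArg Subtype.val hx.symm

section ScalarPlusRankOne

variable {K M : Type*} [Field K] [AddCommGroup M] [Module K M] (c : K) (φ : M →ₗ[K] K) (w : M)

theorem LinearMap.trace_smul_id_add_smulRight [Module.Finite K M] :
    LinearMap.trace K M (c • LinearMap.id + φ.smulRight w) = c * Module.finrank K M + φ w := by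
  simp

theorem LinearMap.smul_id_add_smulRight_comp_self :
    (c • LinearMap.id + φ.smulRight w) ∘ₗ (c • LinearMap.id + φ.smulRight w)
      = c ^ 2 • LinearMap.id + (2 * c + φ w) • φ.smulRight w := by
  ext x
  simp only [LinearMap.comp_apply, LinearMap.add_apply, LinearMap.smul_apply, LinearMap.id_apply,
    LinearMap.smulRight_apply, map_add, map_smul]
  module

end ScalarPlusRankOne

theorem kn_combination_eq_zero_of_eq_smul_add_rankOne {E : Type*} {g A A₂ : E → E → ℝ}
    {φ ψ : E → ℝ} {n α t : ℝ} (hn : n ≠ 1)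
    (hA : ∀ u v, A u v = α * g u v + φ u * ψ v)
    (hA₂ : ∀ u v, A₂ u v = α ^ 2 * g u v + (2 * α + t) * (φ u * ψ v)) (x₁ x₂ x₃ x₄ : E) :
    kn g A₂ x₁ x₂ x₃ x₄ + ((n - 2) / 2) * kn A A x₁ x₂ x₃ x₄
      - (n * α + t) * kn g A x₁ x₂ x₃ x₄
      + (((n * α + t) ^ 2 - (n * α ^ 2 + (2 * α + t) * t)) / (2 * (n - 1)))
        * kn g g x₁ x₂ x₃ x₄ = 0 := by
  have hn' : n - 1 ≠ 0 := sub_ne_zero.mpr hn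
  simp only [kn, hA, hA₂]
  field_simp
  ring

theorem stmt_10_general {V : Type*} [AddCommGroup V] [Module ℝ V]
    (n : ℕ) (hn3 : 3 ≤ n) (hdim : Module.finrank ℝ V = n)
    (g A : V →ₗ[ℝ] V →ₗ[ℝ] ℝ)
    (a : V →ₗ[ℝ] V) (ha : ∀ x y, g (a x) y = A x y)
    (α : ℝ)
    (hrank : Module.finrank ℝ (LinearMap.range (a - α • (LinearMap.id : V →ₗ[ℝ] V))) = 1) :
    ∀ x₁ x₂ x₃ x₄ : V,
      kn (fun u v => g u v) (fun u v => A (a u) v) x₁ x₂ x₃ x₄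
        + (((n : ℝ) - 2) / 2) * kn (fun u v => A u v) (fun u v => A u v) x₁ x₂ x₃ x₄
        - LinearMap.trace ℝ V a * kn (fun u v => g u v) (fun u v => A u v) x₁ x₂ x₃ x₄
        + (((LinearMap.trace ℝ V a) ^ 2 - LinearMap.trace ℝ V (a ∘ₗ a)) / (2 * ((n : ℝ) - 1)))
            * kn (fun u v => g u v) (fun u v => g u v) x₁ x₂ x₃ x₄
      = 0 := by
  have : Module.Finite ℝ V := Module.finite_of_finrank_pos (by omega)
  obtain ⟨φ, w, hφw⟩ := LinearMap.exists_eq_smulRight_of_finrank_range_eq_one hrank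
  have ha_eq : a = α • LinearMap.id + φ.smulRight w := by rw [← hφw]; abel
  have haa_eq : a ∘ₗ a = α ^ 2 • LinearMap.id + (2 * α + φ w) • φ.smulRight w := by
    rw [ha_eq]; exact LinearMap.smul_id_add_smulRight_comp_self α φ w
  have htr : LinearMap.trace ℝ V a = n * α + φ w := by
    rw [ha_eq, LinearMap.trace_smul_id_add_smulRight, hdim, mul_comm]
  have htr₂ : LinearMap.trace ℝ V (a ∘ₗ a) = n * α ^ 2 + (2 * α + φ w) * φ w := by
    rw [haa_eq, map_add, map_smul, map_smul, LinearMap.trace_id, LinearMap.trace_smulRight, hdim,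
      smul_eq_mul, smul_eq_mul, mul_comm]
  intro x₁ x₂ x₃ x₄
  rw [htr, htr₂]
  refine kn_combination_eq_zero_of_eq_smul_add_rankOne (φ := φ) (ψ := g w) (by norm_cast; omega)
    (fun u v => ?_) (fun u v => ?_) _ _ _ _
  · rw [← ha, ha_eq]
    simp
  · rw [← ha, ← LinearMap.comp_apply a a, haa_eq]
    simp

/-- if `rank(A − α·g) = 1` then `E(A) = 0`. -/
theorem stmt_10 {V : Type*} [AddCommGroup V] [Module ℝ V] [FiniteDimensional ℝ V]
    (n : ℕ) (hn3 : 3 ≤ n) (hdim : Module.finrank ℝ V = n)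
    (g A : V →ₗ[ℝ] V →ₗ[ℝ] ℝ)
    (hg : ∀ x y, g x y = g y x)
    (hgnd : ∀ x : V, (∀ y : V, g x y = 0) → x = 0)
    (hA : ∀ x y, A x y = A y x)
    (a : V →ₗ[ℝ] V) (ha : ∀ x y, g (a x) y = A x y)
    (α : ℝ)
    (hrank : Module.finrank ℝ (LinearMap.range (a - α • (LinearMap.id : V →ₗ[ℝ] V))) = 1) :
    ∀ x₁ x₂ x₃ x₄ : V,
      kn (fun u v => g u v) (fun u v => A (a u) v) x₁ x₂ x₃ x₄
        + (((n : ℝ) - 2) / 2) * kn (fun u v => A u v) (fun u v => A u v) x₁ x₂ x₃ x₄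
        - LinearMap.trace ℝ V a * kn (fun u v => g u v) (fun u v => A u v) x₁ x₂ x₃ x₄
        + (((LinearMap.trace ℝ V a) ^ 2 - LinearMap.trace ℝ V (a ∘ₗ a)) / (2 * ((n : ℝ) - 1)))
            * kn (fun u v => g u v) (fun u v => g u v) x₁ x₂ x₃ x₄
      = 0 :=
  stmt_10_general n hn3 hdim g A a ha α hrank
end

section
/- Let (V,g) be an n-dimensional (n ≥ 3) real vector space with a nondegenerate symmetric bilinear form g, let A be a symmetric bilinear form on V with rank(A − α·g) = 1 for some α ∈ ℝ. Then A² − (tr(A²)/n)·g = (tr(A) − (n−2)α)·(A − (tr(A)/n)·g). -/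
/-!
Write `b = a - α • id`. An endomorphism `b` of rank one maps its range, a line, to itself, so it
acts there as a scalar `c`; hence `b ∘ b = c • b` and, the trace being computable on the range,
`c = tr b`. Then `a ∘ a = (c + 2α) • b + α² • id`, `tr a = c + nα` and `tr (a ∘ a) = (c + 2α) c + nα²`,
and both sides of the identity equal `(c + 2α) • (b - (c / n) • id)`. Pairing with `g` turns it
into the stated identity of bilinear forms.
-/

variable {V : Type*} [AddCommGroup V] [Module ℝ V]

open Module

namespace LinearMap

variable {K E : Type*} [Field K] [AddCommGroup E] [Module K E] [FiniteDimensional K E]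

theorem comp_self_eq_trace_smul_of_finrank_range_eq_one (b : E →ₗ[K] E)
    (h : finrank K (range b) = 1) : b ∘ₗ b = trace K E b • b := by
  have hmem : ∀ x, b x ∈ range b := mem_range_self b
  obtain ⟨c, hc, -⟩ := (b.restrict fun x _ ↦ hmem x).existsUnique_eq_smul_id_of_finrank_eq_one h
  have htrace : trace K E b = c := by
    rw [← trace_restrict_eq_of_forall_mem (range b) b hmem, hc, map_smul, trace_id, h]
    simp
  ext x
  simpa [htrace] using congr(($hc ⟨b x, hmem x⟩ : E))

theorem comp_self_sub_trace_smul_id_eq [CharZero K] (a : E →ₗ[K] E) (α : K)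
    (h : finrank K (range (a - α • id)) = 1) :
    a ∘ₗ a - (trace K E (a ∘ₗ a) / finrank K E) • id
      = (trace K E a - (finrank K E - 2) * α) • (a - (trace K E a / finrank K E) • id) := by
  set b := a - α • id
  have hb := b.comp_self_eq_trace_smul_of_finrank_range_eq_one h
  have hn : (finrank K E : K) ≠ 0 := by
    have := h ▸ Submodule.finrank_le (range b)
    exact_mod_cast (by omega : finrank K E ≠ 0)
  have ha : a = b + α • id := (sub_add_cancel a _).symm
  clear_value b
  subst ha
  have hsq : (b + α • id) ∘ₗ (b + α • id) = (trace K E b + 2 * α) • b + α ^ 2 • id := by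
    ext x
    have := congr($hb x)
    simp only [comp_apply, add_apply, smul_apply, id_apply, map_add, map_smul] at this ⊢
    rw [this]
    module
  rw [hsq]
  simp only [map_add, map_smul, trace_id, smul_eq_mul]
  match_scalars <;> field_simp <;> ring

end LinearMap

theorem stmt_11_general {V : Type*} [AddCommGroup V] [Module ℝ V] [FiniteDimensional ℝ V]
    (n : ℕ) (hdim : Module.finrank ℝ V = n)
    (g A : V →ₗ[ℝ] V →ₗ[ℝ] ℝ)
    (a : V →ₗ[ℝ] V) (ha : ∀ x y, g (a x) y = A x y)
    (α : ℝ)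
    (hrank : Module.finrank ℝ (LinearMap.range (a - α • (LinearMap.id : V →ₗ[ℝ] V))) = 1) :
    ∀ x y : V,
      A (a x) y - (LinearMap.trace ℝ V (a ∘ₗ a) / (n : ℝ)) * g x y
        = (LinearMap.trace ℝ V a - ((n : ℝ) - 2) * α)
            * (A x y - (LinearMap.trace ℝ V a / (n : ℝ)) * g x y) := by
  intro x y
  have h := congr(g ($(a.comp_self_sub_trace_smul_id_eq α hrank) x) y)
  simpa only [LinearMap.sub_apply, LinearMap.smul_apply, LinearMap.comp_apply,
    LinearMap.id_apply, map_sub, map_smul, smul_eq_mul, ha, hdim] using h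

/-- if `rank(A − α·g) = 1` then
`A² − (tr(A²)/n)·g = (tr(A) − (n−2)α)·(A − (tr(A)/n)·g)`. -/
theorem stmt_11 {V : Type*} [AddCommGroup V] [Module ℝ V] [FiniteDimensional ℝ V]
    (n : ℕ) (hn3 : 3 ≤ n) (hdim : Module.finrank ℝ V = n)
    (g A : V →ₗ[ℝ] V →ₗ[ℝ] ℝ)
    (hg : ∀ x y, g x y = g y x)
    (hgnd : ∀ x : V, (∀ y : V, g x y = 0) → x = 0)
    (hA : ∀ x y, A x y = A y x)
    (a : V →ₗ[ℝ] V) (ha : ∀ x y, g (a x) y = A x y)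
    (α : ℝ)
    (hrank : Module.finrank ℝ (LinearMap.range (a - α • (LinearMap.id : V →ₗ[ℝ] V))) = 1) :
    ∀ x y : V,
      A (a x) y - (LinearMap.trace ℝ V (a ∘ₗ a) / (n : ℝ)) * g x y
        = (LinearMap.trace ℝ V a - ((n : ℝ) - 2) * α)
            * (A x y - (LinearMap.trace ℝ V a / (n : ℝ)) * g x y) :=
  stmt_11_general n hdim g A a ha α hrank
end

section
/- Let (V,g) be an n-dimensional (n ≥ 4) real vector space with a nondegenerate symmetric bilinear form g, and let A₁, A₂ be symmetric bilinear forms on V with A₂ = A₁ + λ·g for some λ ∈ ℝ. Then E(A₂) = E(A₁), where E(A) = g ∧ A² + ((n−2)/2)·A ∧ A − tr(A)·(g ∧ A) + ((tr(A)² − tr(A²))/(2(n−1)))·(g ∧ g). -/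
variable {V : Type*} [AddCommGroup V] [Module ℝ V]

/-!
Since `g` is nondegenerate, `A₂ = A₁ + λ g` forces `a₂ = a₁ + λ id`, hence
`A₂² = A₁² + 2λ A₁ + λ² g`, `tr A₂ = tr A₁ + λ n` and `tr A₂² = tr A₁² + 2λ tr A₁ + λ² n`.
Substituting into `E` and expanding the Kulkarni–Nomizu products bilinearly, the `g ∧ A₁` terms
cancel because `2λ + (n - 2)λ - nλ = 0`, and the `g ∧ g` terms cancel as well.
-/

section Endomorphism

variable {R M : Type*} [CommRing R] [AddCommGroup M] [Module R M]

theorem eq_add_smul_id_of_forms_eq_add_smul {g A B : M →ₗ[R] M →ₗ[R] R}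
    (hgnd : ∀ x : M, (∀ y : M, g x y = 0) → x = 0) {a b : M →ₗ[R] M}
    (ha : ∀ x y, g (a x) y = A x y) (hb : ∀ x y, g (b x) y = B x y)
    {l : R} (hl : B = A + l • g) :
    b = a + l • LinearMap.id := by
  ext x
  refine sub_eq_zero.mp (hgnd _ fun y => ?_)
  simp [ha, hb, hl]

end Endomorphism

section Trace

variable {K M : Type*} [Field K] [AddCommGroup M] [Module K M] [FiniteDimensional K M]

theorem trace_add_smul_id (a : M →ₗ[K] M) (l : K) :
    LinearMap.trace K M (a + l • LinearMap.id) =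
      LinearMap.trace K M a + l * Module.finrank K M := by
  simp [LinearMap.trace_id]

theorem trace_comp_self_add_smul_id (a : M →ₗ[K] M) (l : K) :
    LinearMap.trace K M ((a + l • LinearMap.id) ∘ₗ (a + l • LinearMap.id)) =
      LinearMap.trace K M (a ∘ₗ a) + 2 * l * LinearMap.trace K M a
        + l ^ 2 * Module.finrank K M := by
  simp only [LinearMap.add_comp, LinearMap.comp_add, LinearMap.smul_comp, LinearMap.comp_smul,
    LinearMap.id_comp, LinearMap.comp_id, map_add, map_smul, LinearMap.trace_id, smul_eq_mul]
  ring

end Trace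

/-- The tensor `E(A)` of a form `A` with square `Asq = A²`, `t = tr A` and `s = tr A²`. -/
noncomputable def tensorE {W : Type*} (n t s : ℝ) (g A Asq : W → W → ℝ) : W → W → W → W → ℝ :=
  fun x₁ x₂ x₃ x₄ =>
    kn g Asq x₁ x₂ x₃ x₄ + ((n - 2) / 2) * kn A A x₁ x₂ x₃ x₄ - t * kn g A x₁ x₂ x₃ x₄
      + ((t ^ 2 - s) / (2 * (n - 1))) * kn g g x₁ x₂ x₃ x₄

theorem tensorE_add_smul {W : Type*} {n : ℝ} (hn : n ≠ 1) (t s l : ℝ) (g A Asq : W → W → ℝ) :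
    tensorE n (t + l * n) (s + 2 * l * t + l ^ 2 * n) g (A + l • g)
        (Asq + (2 * l) • A + l ^ 2 • g) =
      tensorE n t s g A Asq := by
  have hn' : n - 1 ≠ 0 := sub_ne_zero.mpr hn
  ext x₁ x₂ x₃ x₄
  simp only [tensorE, kn, Pi.add_apply, Pi.smul_apply, smul_eq_mul]
  field_simp
  ring

theorem stmt_12_general {V : Type*} [AddCommGroup V] [Module ℝ V] [FiniteDimensional ℝ V]
    (n : ℕ) (hn4 : 4 ≤ n) (hdim : Module.finrank ℝ V = n)
    (g A₁ A₂ : V →ₗ[ℝ] V →ₗ[ℝ] ℝ)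
    (hgnd : ∀ x : V, (∀ y : V, g x y = 0) → x = 0)
    (a₁ a₂ : V →ₗ[ℝ] V)
    (ha₁ : ∀ x y, g (a₁ x) y = A₁ x y) (ha₂ : ∀ x y, g (a₂ x) y = A₂ x y)
    (l : ℝ) (hl : A₂ = A₁ + l • g) :
    ∀ x₁ x₂ x₃ x₄ : V,
      kn (fun u v => g u v) (fun u v => A₂ (a₂ u) v) x₁ x₂ x₃ x₄
        + (((n : ℝ) - 2) / 2) * kn (fun u v => A₂ u v) (fun u v => A₂ u v) x₁ x₂ x₃ x₄
        - LinearMap.trace ℝ V a₂ * kn (fun u v => g u v) (fun u v => A₂ u v) x₁ x₂ x₃ x₄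
        + (((LinearMap.trace ℝ V a₂) ^ 2 - LinearMap.trace ℝ V (a₂ ∘ₗ a₂))
              / (2 * ((n : ℝ) - 1)))
            * kn (fun u v => g u v) (fun u v => g u v) x₁ x₂ x₃ x₄
      = kn (fun u v => g u v) (fun u v => A₁ (a₁ u) v) x₁ x₂ x₃ x₄
        + (((n : ℝ) - 2) / 2) * kn (fun u v => A₁ u v) (fun u v => A₁ u v) x₁ x₂ x₃ x₄
        - LinearMap.trace ℝ V a₁ * kn (fun u v => g u v) (fun u v => A₁ u v) x₁ x₂ x₃ x₄
        + (((LinearMap.trace ℝ V a₁) ^ 2 - LinearMap.trace ℝ V (a₁ ∘ₗ a₁))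
              / (2 * ((n : ℝ) - 1)))
            * kn (fun u v => g u v) (fun u v => g u v) x₁ x₂ x₃ x₄ := by
  have ha : a₂ = a₁ + l • LinearMap.id := eq_add_smul_id_of_forms_eq_add_smul hgnd ha₁ ha₂ hl
  have hA : (fun u v => A₂ u v) = (fun u v => A₁ u v) + l • fun u v => g u v := by
    ext u v; simp [hl]
  have hAsq : (fun u v => A₂ (a₂ u) v) =
      (fun u v => A₁ (a₁ u) v) + (2 * l) • (fun u v => A₁ u v) + l ^ 2 • fun u v => g u v := by
    ext u v
    simp only [hl, ha, LinearMap.add_apply, LinearMap.smul_apply, LinearMap.id_coe, id_eq,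
      map_add, map_smul, smul_add, smul_eq_mul, ha₁, Pi.add_apply, Pi.smul_apply]
    ring
  have hn : (n : ℝ) ≠ 1 := by exact_mod_cast (by omega : n ≠ 1)
  have hE := tensorE_add_smul hn (LinearMap.trace ℝ V a₁) (LinearMap.trace ℝ V (a₁ ∘ₗ a₁)) l
    (fun u v => g u v) (fun u v => A₁ u v) (fun u v => A₁ (a₁ u) v)
  rw [← hA, ← hAsq, ← hdim, ← trace_add_smul_id, ← trace_comp_self_add_smul_id, ← ha,
    hdim] at hE
  exact fun x₁ x₂ x₃ x₄ => congrFun (congrFun (congrFun (congrFun hE x₁) x₂) x₃) x₄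

/-- if `A₂ = A₁ + λ·g` then `E(A₂) = E(A₁)`. -/
theorem stmt_12 {V : Type*} [AddCommGroup V] [Module ℝ V] [FiniteDimensional ℝ V]
    (n : ℕ) (hn4 : 4 ≤ n) (hdim : Module.finrank ℝ V = n)
    (g A₁ A₂ : V →ₗ[ℝ] V →ₗ[ℝ] ℝ)
    (hg : ∀ x y, g x y = g y x)
    (hgnd : ∀ x : V, (∀ y : V, g x y = 0) → x = 0)
    (hA₁ : ∀ x y, A₁ x y = A₁ y x) (hA₂ : ∀ x y, A₂ x y = A₂ y x)
    (a₁ a₂ : V →ₗ[ℝ] V)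
    (ha₁ : ∀ x y, g (a₁ x) y = A₁ x y) (ha₂ : ∀ x y, g (a₂ x) y = A₂ x y)
    (l : ℝ) (hl : A₂ = A₁ + l • g) :
    ∀ x₁ x₂ x₃ x₄ : V,
      kn (fun u v => g u v) (fun u v => A₂ (a₂ u) v) x₁ x₂ x₃ x₄
        + (((n : ℝ) - 2) / 2) * kn (fun u v => A₂ u v) (fun u v => A₂ u v) x₁ x₂ x₃ x₄
        - LinearMap.trace ℝ V a₂ * kn (fun u v => g u v) (fun u v => A₂ u v) x₁ x₂ x₃ x₄
        + (((LinearMap.trace ℝ V a₂) ^ 2 - LinearMap.trace ℝ V (a₂ ∘ₗ a₂))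
              / (2 * ((n : ℝ) - 1)))
            * kn (fun u v => g u v) (fun u v => g u v) x₁ x₂ x₃ x₄
      = kn (fun u v => g u v) (fun u v => A₁ (a₁ u) v) x₁ x₂ x₃ x₄
        + (((n : ℝ) - 2) / 2) * kn (fun u v => A₁ u v) (fun u v => A₁ u v) x₁ x₂ x₃ x₄
        - LinearMap.trace ℝ V a₁ * kn (fun u v => g u v) (fun u v => A₁ u v) x₁ x₂ x₃ x₄
        + (((LinearMap.trace ℝ V a₁) ^ 2 - LinearMap.trace ℝ V (a₁ ∘ₗ a₁))
              / (2 * ((n : ℝ) - 1)))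
            * kn (fun u v => g u v) (fun u v => g u v) x₁ x₂ x₃ x₄ :=
  stmt_12_general n hn4 hdim g A₁ A₂ hgnd a₁ a₂ ha₁ ha₂ l hl
end

section
/- Let (V,g) be an n-dimensional (n ≥ 4) real vector space with a nondegenerate symmetric bilinear form g. Suppose R is a generalized curvature tensor on V (with Ricci contraction S := Ric(R), S² the g-square of S, and κ := tr(S)) satisfying R = (α₂/2)·S∧S + α₃·g∧S + α₄·g∧S² + (α₅/2)·g∧g for real numbers α₂,…,α₅. Then the Weyl tensor C := R − (1/(n−2))·g∧S + (κ/(2(n−2)(n−1)))·g∧g equals (α₂/(n−2))·E, where E = g∧S² + ((n−2)/2)·S∧S − κ·g∧S + ((κ² − tr(S²))/(2(n−1)))·g∧g. -/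
variable {V : Type*} [AddCommGroup V] [Module ℝ V]

/-- A generalized curvature tensor: skew in the first and last pairs, symmetric under
pair interchange, and satisfying the first Bianchi identity. -/
def IsGenCurv (R : V → V → V → V → ℝ) : Prop :=
  (∀ x₁ x₂ x₃ x₄, R x₂ x₁ x₃ x₄ = - R x₁ x₂ x₃ x₄) ∧
  (∀ x₁ x₂ x₃ x₄, R x₁ x₂ x₄ x₃ = - R x₁ x₂ x₃ x₄) ∧
  (∀ x₁ x₂ x₃ x₄, R x₁ x₂ x₃ x₄ = R x₃ x₄ x₁ x₂) ∧
  (∀ x₁ x₂ x₃ x₄, R x₁ x₂ x₃ x₄ + R x₂ x₃ x₁ x₄ + R x₃ x₁ x₂ x₄ = 0)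

/-! Contracting the hypothesis on `R` with the Ricci formula for Kulkarni–Nomizu products
expresses `S` as a combination of `S`, `S²` and `g`; tracing that gives a scalar relation between
`κ` and `tr S²`. After substituting the hypothesis, `C - α₂ / (n - 2) • E` is `g ∧ P` for a
combination `P` of `S`, `S²`, `g` whose coefficients vanish by these two relations. -/

open Finset

section PseudoOrthonormalFrame

variable {ι : Type*} [Fintype ι]

def ricci (e : ι → V) (ε : ι → ℝ) (T : V → V → V → V → ℝ) (x y : V) : ℝ :=
  ∑ i, ε i * T (e i) x y (e i)

theorem isSelfAdjoint_of_apply_eq_ricci {g : V →ₗ[ℝ] V →ₗ[ℝ] ℝ} (hg : ∀ x y, g x y = g y x)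
    {R : V → V → V → V → ℝ} (hR : IsGenCurv R) {e : ι → V} {ε : ι → ℝ} {s : V →ₗ[ℝ] V}
    (hs : ∀ x y, g (s x) y = ricci e ε R x y) : g.IsSelfAdjoint s := by
  obtain ⟨hskew₁, hskew₂, hpair, -⟩ := hR
  have hsymm (x y : V) : ricci e ε R x y = ricci e ε R y x :=
    sum_congr rfl fun i _ => by
      linear_combination
        ε i * (hpair (e i) x y (e i) + hskew₁ (e i) y (e i) x - hskew₂ (e i) y x (e i))
  intro x y
  rw [hs, hsymm, ← hs, hg]

variable [DecidableEq ι] {g : V →ₗ[ℝ] V →ₗ[ℝ] ℝ} {e : Module.Basis ι ℝ V} {ε : ι → ℝ}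

theorem apply_basis_eq_sign_mul_repr
    (horth : ∀ i j, g (e i) (e j) = if i = j then ε i else 0) (z : V) (i : ι) :
    g z (e i) = ε i * e.repr z i := by
  conv_lhs => rw [← e.sum_repr z]
  simp only [map_sum, map_smul, LinearMap.sum_apply, LinearMap.smul_apply, smul_eq_mul, horth,
    mul_ite, mul_zero, sum_ite_eq', mem_univ, if_true]
  exact mul_comm _ _

theorem sum_sign_mul_apply_basis_mul
    (horth : ∀ i j, g (e i) (e j) = if i = j then ε i else 0) (hε : ∀ i, ε i * ε i = 1)
    (z w : V) : ∑ i, ε i * (g z (e i) * g (e i) w) = g z w := by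
  conv_rhs => rw [← e.sum_repr z]
  simp only [apply_basis_eq_sign_mul_repr horth, map_sum, map_smul, LinearMap.sum_apply,
    LinearMap.smul_apply, smul_eq_mul]
  refine sum_congr rfl fun i _ => ?_
  linear_combination (e.repr z i * g (e i) w) * hε i

theorem sum_sign_mul_apply_self_eq_trace
    (horth : ∀ i j, g (e i) (e j) = if i = j then ε i else 0) (hε : ∀ i, ε i * ε i = 1)
    (f : V →ₗ[ℝ] V) : ∑ i, ε i * g (f (e i)) (e i) = LinearMap.trace ℝ V f := by
  rw [LinearMap.trace_eq_matrix_trace ℝ e f]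
  refine sum_congr rfl fun i _ => ?_
  rw [apply_basis_eq_sign_mul_repr horth, Matrix.diag_apply, LinearMap.toMatrix_apply]
  linear_combination e.repr (f (e i)) i * hε i

theorem ricci_kn
    (horth : ∀ i j, g (e i) (e j) = if i = j then ε i else 0) (hε : ∀ i, ε i * ε i = 1)
    {f h : V →ₗ[ℝ] V} (hf : g.IsSelfAdjoint f) (hh : g.IsSelfAdjoint h) (x y : V) :
    ricci e ε (kn (fun u v => g (f u) v) (fun u v => g (h u) v)) x y
      = LinearMap.trace ℝ V f * g (h x) y + LinearMap.trace ℝ V h * g (f x) y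
        - g (f x) (h y) - g (h x) (f y) := by
  have hexp (a b : V) : ∑ i, ε i * (g a (e i) * g (e i) b) = g a b :=
    sum_sign_mul_apply_basis_mul horth hε a b
  simp only [ricci, kn, ← sum_sign_mul_apply_self_eq_trace horth hε, ← hexp (f x) (h y),
    ← hexp (h x) (f y), sum_mul, ← sum_sub_distrib, ← sum_add_distrib]
  refine sum_congr rfl fun i _ => ?_
  rw [hf (e i) y, hh (e i) y]
  ring

theorem trace_one_eq_card (e : Module.Basis ι ℝ V) :
    LinearMap.trace ℝ V 1 = Fintype.card ι := by
  simp [LinearMap.trace_eq_matrix_trace ℝ e]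

theorem trace_eq_of_forall_apply_eq
    (horth : ∀ i j, g (e i) (e j) = if i = j then ε i else 0) (hε : ∀ i, ε i * ε i = 1)
    {f h : V →ₗ[ℝ] V} (hfh : ∀ x y, g (f x) y = g (h x) y) :
    LinearMap.trace ℝ V f = LinearMap.trace ℝ V h := by
  simp only [← sum_sign_mul_apply_self_eq_trace horth hε, hfh]

theorem ricci_eq_of_eq_kn
    (horth : ∀ i j, g (e i) (e j) = if i = j then ε i else 0) (hε : ∀ i, ε i * ε i = 1)
    {s : V →ₗ[ℝ] V} (hs : g.IsSelfAdjoint s) {R : V → V → V → V → ℝ} {α₂ α₃ α₄ α₅ : ℝ}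
    (hR : ∀ x₁ x₂ x₃ x₄ : V,
      R x₁ x₂ x₃ x₄
        = (α₂ / 2) * kn (fun u v => g (s u) v) (fun u v => g (s u) v) x₁ x₂ x₃ x₄
          + α₃ * kn (fun u v => g u v) (fun u v => g (s u) v) x₁ x₂ x₃ x₄
          + α₄ * kn (fun u v => g u v) (fun u v => g (s (s u)) v) x₁ x₂ x₃ x₄
          + (α₅ / 2) * kn (fun u v => g u v) (fun u v => g u v) x₁ x₂ x₃ x₄)
    (x y : V) :
    ricci e ε R x y
      = g (((α₂ * LinearMap.trace ℝ V s + α₃ * (Fintype.card ι - 2)) • s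
            + (α₄ * (Fintype.card ι - 2) - α₂) • (s ∘ₗ s)
            + (α₃ * LinearMap.trace ℝ V s + α₄ * LinearMap.trace ℝ V (s ∘ₗ s)
                + α₅ * (Fintype.card ι - 1)) • 1) x) y := by
  have hsum : ricci e ε R x y
      = α₂ / 2 * ricci e ε (kn (fun u v => g (s u) v) (fun u v => g (s u) v)) x y
        + α₃ * ricci e ε (kn (fun u v => g u v) (fun u v => g (s u) v)) x y
        + α₄ * ricci e ε (kn (fun u v => g u v) (fun u v => g (s (s u)) v)) x y
        + α₅ / 2 * ricci e ε (kn (fun u v => g u v) (fun u v => g u v)) x y := by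
    simp only [ricci, hR, mul_sum, ← sum_add_distrib]
    exact sum_congr rfl fun i _ => by ring
  have hSS := ricci_kn horth hε hs hs x y
  have hgS := ricci_kn horth hε (f := 1) LinearMap.isAdjointPair_one hs x y
  have hgS₂ := ricci_kn horth hε (f := 1) (h := s ∘ₗ s) LinearMap.isAdjointPair_one
    (hs.mul hs) x y
  have hgg := ricci_kn horth hε (f := 1) (h := 1) LinearMap.isAdjointPair_one
    LinearMap.isAdjointPair_one x y
  simp only [Module.End.one_apply, LinearMap.comp_apply, trace_one_eq_card e] at hSS hgS hgS₂ hgg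
  rw [hsum, hSS, hgS, hgS₂, hgg]
  simp only [LinearMap.add_apply, LinearMap.smul_apply, LinearMap.comp_apply,
    Module.End.one_apply, map_add, map_smul, smul_eq_mul, ← hs _ _]
  ring

end PseudoOrthonormalFrame

theorem stmt_13_general {V : Type*} [AddCommGroup V] [Module ℝ V]
    (n : ℕ) (hn4 : 4 ≤ n)
    (g : V →ₗ[ℝ] V →ₗ[ℝ] ℝ)
    (hg : ∀ x y, g x y = g y x)
    (e : Module.Basis (Fin n) ℝ V) (ε : Fin n → ℝ) (hε : ∀ i, ε i = 1 ∨ ε i = -1)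
    (horth : ∀ i j, g (e i) (e j) = if i = j then ε i else 0)
    (R : V → V → V → V → ℝ) (hRcurv : IsGenCurv R)
    (S : V → V → ℝ) (hS : ∀ x y, S x y = ∑ i, ε i * R (e i) x y (e i))
    (s : V →ₗ[ℝ] V) (hs : ∀ x y, g (s x) y = S x y)
    (α₂ α₃ α₄ α₅ : ℝ)
    (hR : ∀ x₁ x₂ x₃ x₄ : V,
      R x₁ x₂ x₃ x₄
        = (α₂ / 2) * kn S S x₁ x₂ x₃ x₄
          + α₃ * kn (fun u v => g u v) S x₁ x₂ x₃ x₄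
          + α₄ * kn (fun u v => g u v) (fun u v => S (s u) v) x₁ x₂ x₃ x₄
          + (α₅ / 2) * kn (fun u v => g u v) (fun u v => g u v) x₁ x₂ x₃ x₄) :
    ∀ x₁ x₂ x₃ x₄ : V,
      R x₁ x₂ x₃ x₄
          - (1 / ((n : ℝ) - 2)) * kn (fun u v => g u v) S x₁ x₂ x₃ x₄
          + (LinearMap.trace ℝ V s / (2 * ((n : ℝ) - 2) * ((n : ℝ) - 1)))
              * kn (fun u v => g u v) (fun u v => g u v) x₁ x₂ x₃ x₄
        = (α₂ / ((n : ℝ) - 2))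
            * (kn (fun u v => g u v) (fun u v => S (s u) v) x₁ x₂ x₃ x₄
                + (((n : ℝ) - 2) / 2) * kn S S x₁ x₂ x₃ x₄
                - LinearMap.trace ℝ V s * kn (fun u v => g u v) S x₁ x₂ x₃ x₄
                + (((LinearMap.trace ℝ V s) ^ 2 - LinearMap.trace ℝ V (s ∘ₗ s))
                      / (2 * ((n : ℝ) - 1)))
                    * kn (fun u v => g u v) (fun u v => g u v) x₁ x₂ x₃ x₄) := by
  have hε' (i : Fin n) : ε i * ε i = 1 := by rcases hε i with h | h <;> simp [h]
  have hsR (x y : V) : g (s x) y = ricci e ε R x y := (hs x y).trans (hS x y)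
  have hsadj := isSelfAdjoint_of_apply_eq_ricci hg hRcurv hsR
  obtain rfl : S = fun x y => g (s x) y := funext₂ fun x y => (hs x y).symm
  have hRic (x y : V) := (hsR x y).trans (ricci_eq_of_eq_kn horth hε' hsadj hR x y)
  have hκ := trace_eq_of_forall_apply_eq horth hε' hRic
  simp only [map_add, map_smul, trace_one_eq_card e, Fintype.card_fin, smul_eq_mul] at hκ
  simp only [LinearMap.add_apply, LinearMap.smul_apply, LinearMap.comp_apply,
    Module.End.one_apply, map_add, map_smul, smul_eq_mul, Fintype.card_fin] at hRic
  set κ := LinearMap.trace ℝ V s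
  set t := LinearMap.trace ℝ V (s ∘ₗ s)
  -- `C - α₂ / (n - 2) • E = g ∧ P`, where `2 (n - 1) (n - 2) P(x, y)` is the left side of `hP`.
  have hP (x y : V) : 2 * (n - 1) * (α₂ * κ + α₃ * (n - 2) - 1) * g (s x) y
      + 2 * (n - 1) * (α₄ * (n - 2) - α₂) * g (s (s x)) y
      + (κ - α₂ * (κ ^ 2 - t) + α₅ * (n - 1) * (n - 2)) * g x y = 0 := by
    linear_combination -2 * (n - 1) * hRic x y + g x y * hκ
  have hn : (4 : ℝ) ≤ n := by exact_mod_cast hn4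
  have hn₂ : (n : ℝ) - 2 ≠ 0 := by linarith
  have hn₁ : (n : ℝ) - 1 ≠ 0 := by linarith
  intro x₁ x₂ x₃ x₄
  rw [hR]
  simp only [kn]
  field_simp
  linear_combination g x₁ x₄ * hP x₂ x₃ + g x₂ x₃ * hP x₁ x₄ - g x₁ x₃ * hP x₂ x₄
    - g x₂ x₄ * hP x₁ x₃

/-- if a generalized curvature tensor `R` satisfies
`R = (α₂/2)·S∧S + α₃·g∧S + α₄·g∧S² + (α₅/2)·g∧g` with `S = Ric(R)`,
then its Weyl tensor equals `(α₂/(n−2))·E`. -/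
theorem stmt_13 {V : Type*} [AddCommGroup V] [Module ℝ V] [FiniteDimensional ℝ V]
    (n : ℕ) (hn4 : 4 ≤ n) (hdim : Module.finrank ℝ V = n)
    (g : V →ₗ[ℝ] V →ₗ[ℝ] ℝ)
    (hg : ∀ x y, g x y = g y x)
    (hgnd : ∀ x : V, (∀ y : V, g x y = 0) → x = 0)
    (e : Module.Basis (Fin n) ℝ V) (ε : Fin n → ℝ) (hε : ∀ i, ε i = 1 ∨ ε i = -1)
    (horth : ∀ i j, g (e i) (e j) = if i = j then ε i else 0)
    (R : V → V → V → V → ℝ) (hRcurv : IsGenCurv R)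
    (S : V → V → ℝ) (hS : ∀ x y, S x y = ∑ i, ε i * R (e i) x y (e i))
    (s : V →ₗ[ℝ] V) (hs : ∀ x y, g (s x) y = S x y)
    (α₂ α₃ α₄ α₅ : ℝ)
    (hR : ∀ x₁ x₂ x₃ x₄ : V,
      R x₁ x₂ x₃ x₄
        = (α₂ / 2) * kn S S x₁ x₂ x₃ x₄
          + α₃ * kn (fun u v => g u v) S x₁ x₂ x₃ x₄
          + α₄ * kn (fun u v => g u v) (fun u v => S (s u) v) x₁ x₂ x₃ x₄
          + (α₅ / 2) * kn (fun u v => g u v) (fun u v => g u v) x₁ x₂ x₃ x₄) :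
    ∀ x₁ x₂ x₃ x₄ : V,
      R x₁ x₂ x₃ x₄
          - (1 / ((n : ℝ) - 2)) * kn (fun u v => g u v) S x₁ x₂ x₃ x₄
          + (LinearMap.trace ℝ V s / (2 * ((n : ℝ) - 2) * ((n : ℝ) - 1)))
              * kn (fun u v => g u v) (fun u v => g u v) x₁ x₂ x₃ x₄
        = (α₂ / ((n : ℝ) - 2))
            * (kn (fun u v => g u v) (fun u v => S (s u) v) x₁ x₂ x₃ x₄
                + (((n : ℝ) - 2) / 2) * kn S S x₁ x₂ x₃ x₄
                - LinearMap.trace ℝ V s * kn (fun u v => g u v) S x₁ x₂ x₃ x₄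
                + (((LinearMap.trace ℝ V s) ^ 2 - LinearMap.trace ℝ V (s ∘ₗ s))
                      / (2 * ((n : ℝ) - 1)))
                    * kn (fun u v => g u v) (fun u v => g u v) x₁ x₂ x₃ x₄) :=
  stmt_13_general n hn4 g hg e ε hε horth R hRcurv S hS s hs α₂ α₃ α₄ α₅ hR
end

section
/- Let (V,g) be a finite-dimensional real vector space with a nondegenerate symmetric bilinear form g, and let A be a symmetric bilinear form on V of rank 2. Then (g ∧ (A² − tr(A)·A))·(g ∧ (A² − tr(A)·A)) = (1/2)(tr(A²) − tr(A)²)·Q(g, g ∧ (A² − tr(A)·A)), where the left-hand side is the curvature action of the generalized curvature tensor g ∧ (A² − tr(A)·A) on itself and Q is the Tachibana tensor. -/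
variable {V : Type*} [AddCommGroup V] [Module ℝ V]

/-- Derivation action `B · T` of a curvature-like tensor on a (0,4)-tensor, given the
endomorphisms `op x y` metrically associated to `B`. -/
def dotT (op : V → V → V → V) (T : V → V → V → V → ℝ) : V → V → V → V → V → V → ℝ :=
  fun x1 x2 x3 x4 x y =>
    -(T (op x y x1) x2 x3 x4) - T x1 (op x y x2) x3 x4
      - T x1 x2 (op x y x3) x4 - T x1 x2 x3 (op x y x4)

/-! Let `b = a² − tr(a)·a`, so that `A² − tr(A)·A = g(b·,·)`. Since `b = a ∘ (a − tr a)` takes values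
in the plane `range a`, on which Cayley–Hamilton reads `a² − tr(a)·a + det = 0`, we get
`b² = −det·b`; tracing Cayley–Hamilton gives `tr(a²) − tr(a)² = −2 det`, hence `b² = λ b` with
`λ = ½(tr(a²) − tr(a)²)`. The curvature operator of `g ∧ g(b·,·)` is
`z ↦ g(by,z)x − g(bx,z)y + g(y,z)bx − g(x,z)by`, and expanding its derivation action on
`g ∧ g(b·,·)`, with `g(bu,bv) = λ g(bu,v)` and the `g`-self-adjointness of `b`, yields
`λ·Q(g, g ∧ g(b·,·))`. -/

theorem Matrix.mul_self_sub_trace_smul_add_det_smul_one_fin_two {R : Type*} [CommRing R]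
    (M : Matrix (Fin 2) (Fin 2) R) :
    M * M - M.trace • M + M.det • (1 : Matrix (Fin 2) (Fin 2) R) = 0 := by
  ext i j
  fin_cases i <;> fin_cases j <;>
    simp [Matrix.mul_apply, Matrix.trace_fin_two, Matrix.det_fin_two, Fin.sum_univ_two] <;> ring

namespace LinearMap

variable {K W : Type*} [Field K] [AddCommGroup W] [Module K W] [FiniteDimensional K W]

theorem comp_self_sub_trace_smul_add_det_smul_id (hW : Module.finrank K W = 2) (f : W →ₗ[K] W) :
    f ∘ₗ f - trace K W f • f + LinearMap.det f • id = 0 := by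
  let β := Module.finBasisOfFinrankEq K W hW
  apply (toMatrixAlgEquiv β).injective
  rw [← Module.End.mul_eq_comp, ← Module.End.one_eq_id, map_add, map_sub, map_mul, map_smul,
    map_smul, map_one, map_zero, trace_eq_matrix_trace K β, ← det_toMatrix β]
  exact Matrix.mul_self_sub_trace_smul_add_det_smul_one_fin_two _

theorem trace_comp_self_of_finrank_eq_two (hW : Module.finrank K W = 2) (f : W →ₗ[K] W) :
    trace K W (f ∘ₗ f) = trace K W f ^ 2 - 2 * LinearMap.det f := by
  have h := congrArg (trace K W) (comp_self_sub_trace_smul_add_det_smul_id hW f)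
  rw [map_add, map_sub, map_smul, map_smul, trace_id, hW, map_zero, smul_eq_mul,
    smul_eq_mul] at h
  push_cast at h
  linear_combination h

theorem two_smul_comp_self_of_finrank_range_eq_two (a : W →ₗ[K] W)
    (ha : Module.finrank K (range a) = 2) :
    (2 : K) • ((a ∘ₗ a - trace K W a • a) ∘ₗ (a ∘ₗ a - trace K W a • a))
      = (trace K W (a ∘ₗ a) - trace K W a ^ 2) • (a ∘ₗ a - trace K W a • a) := by
  let aR : range a →ₗ[K] range a := a.restrict fun z _ ↦ mem_range_self a z
  have htr : trace K (range a) aR = trace K W a :=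
    trace_restrict_eq_of_forall_mem _ a (mem_range_self a)
  have htr_sq : trace K (range a) (aR ∘ₗ aR) = trace K W (a ∘ₗ a) :=
    trace_restrict_eq_of_forall_mem _ (a ∘ₗ a) fun z ↦ mem_range_self a (a z)
  have hcayley : ∀ u ∈ range a, a (a u) - trace K W a • a u + LinearMap.det aR • u = 0 := by
    intro u hu
    simpa [aR, htr] using congrArg Subtype.val
      (LinearMap.congr_fun (comp_self_sub_trace_smul_add_det_smul_id ha aR) ⟨u, hu⟩)
  have htrace : trace K W (a ∘ₗ a) - trace K W a ^ 2 = -2 * LinearMap.det aR := by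
    rw [← htr, ← htr_sq, trace_comp_self_of_finrank_eq_two ha]; ring
  ext z
  set bz := a (a z) - trace K W a • a z
  have hbz : bz ∈ range a := ⟨a z - trace K W a • z, by simp [bz]⟩
  simp only [smul_apply, comp_apply, sub_apply, htrace]
  linear_combination (norm := module) 2 • hcayley bz hbz

end LinearMap

theorem op_apply_eq_of_apply_eq_kn (g : V →ₗ[ℝ] V →ₗ[ℝ] ℝ)
    (hg_nondeg : ∀ x, (∀ y, g x y = 0) → x = 0)
    (b : V →ₗ[ℝ] V) (op : V → V → V → V)
    (hop : ∀ x y z w, g (op x y z) w = kn (fun u v ↦ g u v) (fun u v ↦ g (b u) v) x y z w)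
    (x y z : V) :
    op x y z = g (b y) z • x - g (b x) z • y + g y z • b x - g x z • b y := by
  refine sub_eq_zero.mp (hg_nondeg _ fun w ↦ ?_)
  simp only [map_sub, map_add, map_smul, LinearMap.sub_apply, LinearMap.add_apply,
    LinearMap.smul_apply, smul_eq_mul, hop, kn]
  ring

theorem dotT_kn_eq_mul_Q4 (g : V →ₗ[ℝ] V →ₗ[ℝ] ℝ) (hg : ∀ u v, g u v = g v u)
    (b : V →ₗ[ℝ] V) (hb : ∀ u v, g (b u) v = g u (b v)) (c : ℝ) (hbb : ∀ z, b (b z) = c • b z)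
    (op : V → V → V → V)
    (hop : ∀ x y z, op x y z = g (b y) z • x - g (b x) z • y + g y z • b x - g x z • b y)
    (x₁ x₂ x₃ x₄ x y : V) :
    dotT op (kn (fun u v ↦ g u v) (fun u v ↦ g (b u) v)) x₁ x₂ x₃ x₄ x y
      = c * Q4 (fun u v ↦ g u v) (kn (fun u v ↦ g u v) (fun u v ↦ g (b u) v))
          x₁ x₂ x₃ x₄ x y := by
  have hb_right : ∀ u v, g u (b v) = g (b u) v := fun u v ↦ (hb u v).symm
  have hbb_form : ∀ u v, g (b u) (b v) = c * g (b u) v := by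
    intro u v; rw [hb, hbb, map_smul, smul_eq_mul, hb_right]
  have hbs : ∀ u v, g (b u) v = g (b v) u := fun u v ↦ (hb u v).trans (hg u (b v))
  simp only [dotT, Q4, kn, wedgeV, hop, map_add, map_sub, map_smul, LinearMap.add_apply,
    LinearMap.sub_apply, LinearMap.smul_apply, smul_eq_mul, hbb]
  simp only [hbb_form]
  simp only [hb_right]
  -- `hbs` and `hg` are permutation lemmas, so `simp` rewrites with them only towards a normal form.
  simp only [hbs]
  simp only [hg]
  ring

/-- for `rank A = 2`,
`(g∧(A²−tr(A)A))·(g∧(A²−tr(A)A)) = (1/2)(tr(A²)−tr(A)²)·Q(g, g∧(A²−tr(A)A))`. -/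
theorem stmt_15 {V : Type*} [AddCommGroup V] [Module ℝ V] [FiniteDimensional ℝ V]
    (g A : V →ₗ[ℝ] V →ₗ[ℝ] ℝ)
    (hg : ∀ x y, g x y = g y x)
    (hgnd : ∀ x : V, (∀ y : V, g x y = 0) → x = 0)
    (hA : ∀ x y, A x y = A y x)
    (a : V →ₗ[ℝ] V) (ha : ∀ x y, g (a x) y = A x y)
    (hrank : Module.finrank ℝ (LinearMap.range a) = 2)
    (op : V → V → V → V)
    (hop : ∀ x y z w : V,
      g (op x y z) w
        = kn (fun u v => g u v)
            (fun u v => A (a u) v - LinearMap.trace ℝ V a * A u v) x y z w) :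
    ∀ x₁ x₂ x₃ x₄ x y : V,
      dotT op
          (kn (fun u v => g u v) (fun u v => A (a u) v - LinearMap.trace ℝ V a * A u v))
          x₁ x₂ x₃ x₄ x y
        = (1/2 : ℝ) * (LinearMap.trace ℝ V (a ∘ₗ a) - (LinearMap.trace ℝ V a) ^ 2)
            * Q4 (fun u v => g u v)
                (kn (fun u v => g u v) (fun u v => A (a u) v - LinearMap.trace ℝ V a * A u v))
                x₁ x₂ x₃ x₄ x y := by
  have hb_sq := LinearMap.two_smul_comp_self_of_finrank_range_eq_two a hrank
  set b := a ∘ₗ a - LinearMap.trace ℝ V a • a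
  have ha_symm : ∀ u v, g (a u) v = g u (a v) := fun u v ↦ by rw [ha, hA, ← ha, hg]
  have hb_symm : ∀ u v, g (b u) v = g u (b v) := by
    intro u v; simp [b, ha_symm, smul_eq_mul]
  have hB : (fun u v ↦ A (a u) v - LinearMap.trace ℝ V a * A u v) = fun u v ↦ g (b u) v := by
    funext u v; simp [b, ← ha, smul_eq_mul]
  have hbb : ∀ z, b (b z)
      = ((1/2 : ℝ) * (LinearMap.trace ℝ V (a ∘ₗ a) - LinearMap.trace ℝ V a ^ 2)) • b z := by
    intro z
    rw [mul_smul, ← LinearMap.smul_apply, ← hb_sq, LinearMap.smul_apply, LinearMap.comp_apply,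
      smul_smul, one_div, inv_mul_cancel₀ two_ne_zero, one_smul]
  rw [hB] at hop ⊢
  exact dotT_kn_eq_mul_Q4 g hg b hb_symm _ hbb op (op_apply_eq_of_apply_eq_kn g hgnd b op hop)
end
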